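/- Let n ≥ 1, t₀ ∈ ℝ, and let A : [t₀, ∞) → M_n(ℂ) be a continuous matrix-valued function such that (i) for every t ≥ t₀ the improper Riemann integral Ã(t) := lim_{T→∞} ∫_t^T A(s) ds exists (entrywise), and (ii) the function t ↦ A(t)·Ã(t) is integrable on [t₀, ∞). Then for every index 1 ≤ j ≤ n there exist t₁ ≥ t₀ and a differentiable function x : [t₁, ∞) → ℂⁿ with x′(t) = A(t) x(t) for all t ≥ t₁ and lim_{t→∞} x(t) = e_j, where e_j is the j-th standard unit vector of ℂⁿ. -/

import Mathlib

/-!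
Put `B t = ∫_t^∞ A`, so that `B' = -A` and `B → 0`. The substitution `X = (1 - B) Y` turns
`X' = A X` into `Y' = -C Y` with `C = (1 - B)⁻¹ A B`, which is integrable, with `∫_{t₁}^∞ ‖C‖ < 1`
once `t₁` is large. The integral equation `Y t = 1 + ∫_t^∞ C Y` is then solved by the contraction
principle on bounded continuous functions, and `Y → 1` forces `X → 1`. The columns of this
fundamental matrix `X` are the required solutions. The argument works in any real Banach algebra.
-/

open MeasureTheory Filter Set Matrix Topology BoundedContinuousFunction

section ImproperIntegral

variable {E : Type*} [NormedAddCommGroup E] [NormedSpace ℝ E] {f : ℝ → E} {a t : ℝ}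

theorem hasDerivWithinAt_intervalIntegral_Ici [CompleteSpace E] (hf : ContinuousOn f (Ici a))
    (ht : t ∈ Ici a) : HasDerivWithinAt (fun u => ∫ s in a..u, f s) (f t) (Ici a) t := by
  have hint : IntervalIntegrable f volume a t :=
    (hf.mono (by rw [uIcc_of_le ht]; exact Icc_subset_Ici_self)).intervalIntegrable
  have hmeas : ∀ l, l ≤ 𝓟 (Ici a) → StronglyMeasurableAtFilter f l :=
    fun _ hl => ⟨Ici a, hl (mem_principal_self _), hf.aestronglyMeasurable measurableSet_Ici⟩
  rcases (mem_Ici.1 ht).eq_or_lt with rfl | hlt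
  · exact intervalIntegral.integral_hasDerivWithinAt_right hint
      (hmeas _ (inf_le_right.trans (principal_mono.2 Ioi_subset_Ici_self)))
      ((hf _ ht).mono Ioi_subset_Ici_self)
  · exact (intervalIntegral.integral_hasDerivAt_right hint
      (hmeas _ (le_principal_iff.2 (Ici_mem_nhds hlt)))
      (hf.continuousAt (Ici_mem_nhds hlt))).hasDerivWithinAt

theorem tendsto_setIntegral_Ioi_atTop_zero (hf : IntegrableOn f (Ioi a)) :
    Tendsto (fun t => ∫ s in Ioi t, f s) atTop (𝓝 0) := by
  have h := (intervalIntegral_tendsto_integral_Ioi a hf tendsto_id).const_sub (∫ s in Ioi a, f s)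
  rw [sub_self] at h
  refine h.congr' ?_
  filter_upwards [eventually_ge_atTop a] with t ht
  rw [id, ← intervalIntegral.integral_Ioi_sub_Ioi hf ht, sub_sub_cancel]

theorem hasDerivWithinAt_setIntegral_Ioi [CompleteSpace E] (hfi : IntegrableOn f (Ioi a))
    (hf : ContinuousOn f (Ici a)) (ht : t ∈ Ici a) :
    HasDerivWithinAt (fun u => ∫ s in Ioi u, f s) (-f t) (Ici a) t := by
  have key : EqOn (fun u => ∫ s in Ioi u, f s)
      (fun u => (∫ s in Ioi a, f s) - ∫ s in a..u, f s) (Ici a) := fun u hu => by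
    dsimp only
    rw [← intervalIntegral.integral_Ioi_sub_Ioi hfi hu, sub_sub_cancel]
  exact ((hasDerivWithinAt_intervalIntegral_Ici hf ht).const_sub _).congr key (key ht)

variable {B : ℝ → E}

theorem eq_sub_intervalIntegral_of_tendsto (hf : ContinuousOn f (Ici a))
    (hB : ∀ t ∈ Ici a, Tendsto (fun T => ∫ s in t..T, f s) atTop (𝓝 (B t))) (ht : t ∈ Ici a) :
    B t = B a - ∫ s in a..t, f s := by
  have hint : ∀ u ∈ Ici a, ∀ v ∈ Ici a, IntervalIntegrable f volume u v := fun u hu v hv =>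
    (hf.mono fun s hs => le_trans (le_min hu hv) hs.1).intervalIntegrable
  refine tendsto_nhds_unique (hB t ht) (((hB a self_mem_Ici).sub_const _).congr' ?_)
  filter_upwards [eventually_ge_atTop t] with T hT
  exact intervalIntegral.integral_interval_sub_left (hint a self_mem_Ici T (ht.trans hT))
    (hint a self_mem_Ici t ht)

theorem hasDerivWithinAt_of_tendsto_intervalIntegral [CompleteSpace E]
    (hf : ContinuousOn f (Ici a))
    (hB : ∀ t ∈ Ici a, Tendsto (fun T => ∫ s in t..T, f s) atTop (𝓝 (B t))) (ht : t ∈ Ici a) :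
    HasDerivWithinAt B (-f t) (Ici a) t :=
  ((hasDerivWithinAt_intervalIntegral_Ici hf ht).const_sub (B a)).congr
    (fun _ hu => eq_sub_intervalIntegral_of_tendsto hf hB hu)
    (eq_sub_intervalIntegral_of_tendsto hf hB ht)

theorem tendsto_zero_of_tendsto_intervalIntegral (hf : ContinuousOn f (Ici a))
    (hB : ∀ t ∈ Ici a, Tendsto (fun T => ∫ s in t..T, f s) atTop (𝓝 (B t))) :
    Tendsto B atTop (𝓝 0) := by
  have h := (hB a self_mem_Ici).const_sub (B a)
  rw [sub_self] at h
  refine h.congr' ?_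
  filter_upwards [eventually_ge_atTop a] with t ht
  exact (eq_sub_intervalIntegral_of_tendsto hf hB ht).symm

end ImproperIntegral

section Volterra

variable {R : Type*} [NormedRing R] {C : ℝ → R} {a : ℝ}

theorem integrableOn_mul_boundedContinuousFunction {s : Set ℝ} (hC : IntegrableOn C s)
    (y : ℝ →ᵇ R) : IntegrableOn (fun u => C u * y u) s :=
  (hC.norm.mul_const ‖y‖).mono' (hC.aestronglyMeasurable.mul y.continuous.aestronglyMeasurable)
    (ae_of_all _ fun u => (norm_mul_le _ _).trans
      (mul_le_mul_of_nonneg_left (y.norm_coe_le_norm u) (norm_nonneg _)))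

variable [NormedSpace ℝ R]

theorem norm_setIntegral_Ioi_mul_le (hC : IntegrableOn C (Ioi a)) (y : ℝ →ᵇ R) {b : ℝ}
    (hb : a ≤ b) : ‖∫ s in Ioi b, C s * y s‖ ≤ (∫ s in Ioi a, ‖C s‖) * ‖y‖ := calc
  _ ≤ ∫ s in Ioi b, ‖C s‖ * ‖y‖ :=
    norm_integral_le_of_norm_le ((hC.mono_set (Ioi_subset_Ioi hb)).norm.mul_const _)
      (ae_of_all _ fun s => (norm_mul_le _ _).trans
        (mul_le_mul_of_nonneg_left (y.norm_coe_le_norm s) (norm_nonneg _)))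
  _ = (∫ s in Ioi b, ‖C s‖) * ‖y‖ := integral_mul_const _ _
  _ ≤ _ := mul_le_mul_of_nonneg_right (setIntegral_mono_set hC.norm
    (ae_of_all _ fun _ => norm_nonneg _) (Ioi_subset_Ioi hb).eventuallyLE) (norm_nonneg _)

/-- The operator `y ↦ v + ∫_t^∞ C y`, made constant on `(-∞, a]` so that it acts on bounded
continuous functions on all of `ℝ`. -/
noncomputable def volterraTail (hC : IntegrableOn C (Ioi a)) (v : R) (y : ℝ →ᵇ R) : ℝ →ᵇ R :=
  .ofNormedAddCommGroup (fun t => v + ∫ s in Ioi (max t a), C s * y s)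
    (continuous_const.add <|
      (integrableOn_mul_boundedContinuousFunction hC y).continuousOn_Ici_primitive_Ioi
        |>.comp_continuous (continuous_id.max continuous_const) fun t => le_max_right t a)
    (‖v‖ + (∫ s in Ioi a, ‖C s‖) * ‖y‖)
    fun t => (norm_add_le _ _).trans
      (add_le_add le_rfl (norm_setIntegral_Ioi_mul_le hC y (le_max_right t a)))

theorem volterraTail_apply (hC : IntegrableOn C (Ioi a)) (v : R) (y : ℝ →ᵇ R) (t : ℝ) :
    volterraTail hC v y t = v + ∫ s in Ioi (max t a), C s * y s :=
  rfl

theorem lipschitzWith_volterraTail (hC : IntegrableOn C (Ioi a)) (v : R) :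
    LipschitzWith (∫ s in Ioi a, ‖C s‖).toNNReal (volterraTail hC v) := by
  refine LipschitzWith.of_dist_le_mul fun y z => ?_
  rw [Real.coe_toNNReal _ (integral_nonneg fun _ => norm_nonneg _)]
  refine (BoundedContinuousFunction.dist_le (by positivity)).2 fun t => ?_
  have hsub : Ioi (max t a) ⊆ Ioi a := Ioi_subset_Ioi (le_max_right t a)
  rw [dist_eq_norm, dist_eq_norm, volterraTail_apply, volterraTail_apply, add_sub_add_left_eq_sub,
    ← integral_sub ((integrableOn_mul_boundedContinuousFunction hC y).mono_set hsub)
      ((integrableOn_mul_boundedContinuousFunction hC z).mono_set hsub)]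
  simpa only [← mul_sub, BoundedContinuousFunction.coe_sub, Pi.sub_apply] using
    norm_setIntegral_Ioi_mul_le hC (y - z) (le_max_right t a)

theorem exists_hasDerivWithinAt_neg_mul_tendsto [CompleteSpace R] (hCc : ContinuousOn C (Ici a))
    (hC : IntegrableOn C (Ioi a)) (hsmall : ∫ s in Ioi a, ‖C s‖ < 1) (v : R) :
    ∃ y : ℝ → R, (∀ t ∈ Ici a, HasDerivWithinAt y (-(C t * y t)) (Ici a) t) ∧
      Tendsto y atTop (𝓝 v) := by
  have hK : ContractingWith _ (volterraTail hC v) :=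
    ⟨Real.toNNReal_lt_one.2 hsmall, lipschitzWith_volterraTail hC v⟩
  set y := hK.fixedPoint
  have hy : ∀ t ∈ Ici a, y t = v + ∫ s in Ioi t, C s * y s := fun t ht => by
    refine (DFunLike.congr_fun hK.fixedPoint_isFixedPt t).symm.trans ?_
    rw [volterraTail_apply, max_eq_left ht]
  have hyC := integrableOn_mul_boundedContinuousFunction hC y
  refine ⟨y, fun t ht => ?_, ?_⟩
  · exact ((hasDerivWithinAt_setIntegral_Ioi hyC (hCc.mul y.continuous.continuousOn) ht).const_add
      v).congr hy (hy t ht)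
  · have h := (tendsto_setIntegral_Ioi_atTop_zero hyC).const_add v
    rw [add_zero] at h
    refine h.congr' ?_
    filter_upwards [eventually_ge_atTop a] with t ht
    exact (hy t ht).symm

end Volterra

section NormedRing

variable {R : Type*} [NormedRing R] [CompleteSpace R]

theorem ContinuousOn.ring_inverse {α : Type*} [TopologicalSpace α] {f : α → R} {s : Set α}
    (hf : ContinuousOn f s) (hu : ∀ t ∈ s, IsUnit (f t)) :
    ContinuousOn (fun t => Ring.inverse (f t)) s := fun t ht => by
  have h := NormedRing.inverse_continuousAt (hu t ht).unit
  rw [IsUnit.unit_spec] at h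
  exact h.comp_continuousWithinAt (hf t ht)

theorem Filter.Tendsto.eventually_isUnit_one_sub_and_norm_inverse_lt {α : Type*} {l : Filter α}
    {f : α → R} (hf : Tendsto f l (𝓝 0)) :
    ∀ᶠ x in l, IsUnit (1 - f x) ∧ ‖Ring.inverse (1 - f x)‖ < ‖(1 : R)‖ + 1 := by
  have h1f : Tendsto (fun x => 1 - f x) l (𝓝 1) := by simpa using tendsto_const_nhds.sub hf
  have hinv := (NormedRing.inverse_continuousAt (1 : Rˣ)).tendsto.comp h1f
  rw [Units.val_one, Ring.inverse_one] at hinv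
  exact (h1f.eventually (Units.isOpen.mem_nhds isUnit_one)).and
    (hinv.norm.eventually_lt_const (lt_add_one _))

end NormedRing

section Levinson

variable {R : Type*} [NormedRing R] [NormedAlgebra ℝ R] {A B : ℝ → R}

theorem HasDerivWithinAt.one_sub_mul_of_mul_eq {y : ℝ → R} {C : R} {s : Set ℝ} {t : ℝ}
    (hB : HasDerivWithinAt B (-A t) s t) (hy : HasDerivWithinAt y (-(C * y t)) s t)
    (hC : (1 - B t) * C = A t * B t) :
    HasDerivWithinAt (fun u => (1 - B u) * y u) (A t * ((1 - B t) * y t)) s t := by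
  convert (hB.const_sub 1).fun_mul hy using 1
  rw [neg_neg, mul_neg, ← mul_assoc (1 - B t), hC]
  noncomm_ring

variable [CompleteSpace R]

theorem exists_hasDerivWithinAt_mul_tendsto_one_of_small {C : ℝ → R} {t₁ : ℝ}
    (hB : ∀ t ∈ Ici t₁, HasDerivWithinAt B (-A t) (Ici t₁) t) (hB0 : Tendsto B atTop (𝓝 0))
    (hCc : ContinuousOn C (Ici t₁)) (hC : IntegrableOn C (Ioi t₁))
    (hsmall : ∫ s in Ioi t₁, ‖C s‖ < 1) (hAB : ∀ t ∈ Ici t₁, (1 - B t) * C t = A t * B t) :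
    ∃ X : ℝ → R, (∀ t ∈ Ici t₁, HasDerivWithinAt X (A t * X t) (Ici t₁) t) ∧
      Tendsto X atTop (𝓝 1) := by
  obtain ⟨y, hy, hylim⟩ := exists_hasDerivWithinAt_neg_mul_tendsto hCc hC hsmall 1
  refine ⟨fun t => (1 - B t) * y t,
    fun t ht => (hB t ht).one_sub_mul_of_mul_eq (hy t ht) (hAB t ht), ?_⟩
  simpa using (tendsto_const_nhds.sub hB0).mul hylim

theorem exists_hasDerivWithinAt_mul_tendsto_one {t₀ : ℝ} (hA : ContinuousOn A (Ici t₀))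
    (hB : ∀ t ∈ Ici t₀, Tendsto (fun T => ∫ s in t..T, A s) atTop (𝓝 (B t)))
    (hAB : IntegrableOn (fun t => A t * B t) (Ici t₀)) :
    ∃ t₁, t₀ ≤ t₁ ∧ ∃ X : ℝ → R,
      (∀ t ∈ Ici t₁, HasDerivWithinAt X (A t * X t) (Ici t₁) t) ∧ Tendsto X atTop (𝓝 1) := by
  have hB' := fun t ht => hasDerivWithinAt_of_tendsto_intervalIntegral hA hB (t := t) ht
  have hB0 := tendsto_zero_of_tendsto_intervalIntegral hA hB
  set K := ‖(1 : R)‖ + 1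
  have htail : Tendsto (fun t => K * ∫ s in Ioi t, ‖A s * B s‖) atTop (𝓝 0) := by
    simpa using
      (tendsto_setIntegral_Ioi_atTop_zero (hAB.mono_set Ioi_subset_Ici_self).norm).const_mul K
  obtain ⟨t₁, ht₁⟩ := eventually_atTop.1 <|
    hB0.eventually_isUnit_one_sub_and_norm_inverse_lt.and <|
      (htail.eventually_lt_const one_pos).and (eventually_ge_atTop t₀)
  have hsub : Ici t₁ ⊆ Ici t₀ := Ici_subset_Ici.2 (ht₁ t₁ le_rfl).2.2
  have hBc : ContinuousOn B (Ici t₁) := fun t ht => (hB' t (hsub ht)).continuousWithinAt.mono hsub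
  set C := fun t => Ring.inverse (1 - B t) * (A t * B t)
  have hCc : ContinuousOn C (Ici t₁) :=
    ((continuousOn_const.sub hBc).ring_inverse fun t ht => (ht₁ t ht).1.1).mul
      ((hA.mono hsub).mul hBc)
  have hCle : ∀ t ∈ Ioi t₁, ‖C t‖ ≤ K * ‖A t * B t‖ := fun t ht =>
    (norm_mul_le _ _).trans (mul_le_mul_of_nonneg_right (ht₁ t ht.le).1.2.le (norm_nonneg _))
  have hABi : IntegrableOn (fun t => K * ‖A t * B t‖) (Ioi t₁) :=
    (hAB.mono_set (Ioi_subset_Ici_self.trans hsub)).norm.const_mul K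
  have hCi : IntegrableOn C (Ioi t₁) :=
    hABi.mono' ((hCc.mono Ioi_subset_Ici_self).aestronglyMeasurable measurableSet_Ioi)
      ((ae_restrict_iff' measurableSet_Ioi).2 (ae_of_all _ hCle))
  have hsmall : ∫ s in Ioi t₁, ‖C s‖ < 1 := calc
    _ ≤ ∫ s in Ioi t₁, K * ‖A s * B s‖ := setIntegral_mono_on hCi.norm hABi measurableSet_Ioi hCle
    _ = K * ∫ s in Ioi t₁, ‖A s * B s‖ := integral_const_mul _ _
    _ < 1 := (ht₁ t₁ le_rfl).2.1
  refine ⟨t₁, (ht₁ t₁ le_rfl).2.2, exists_hasDerivWithinAt_mul_tendsto_one_of_small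
    (fun t ht => (hB' t (hsub ht)).mono hsub) hB0 hCc hCi hsmall fun t ht => ?_⟩
  rw [← mul_assoc, Ring.mul_inverse_cancel _ (ht₁ t ht).1.1, one_mul]

end Levinson

section L2OpNorm

open scoped Matrix.Norms.L2Operator

variable {m n : Type*} [Fintype m] [Fintype n] [DecidableEq n]

theorem Matrix.intervalIntegral_apply {f : ℝ → Matrix m n ℂ} {a b : ℝ}
    (hf : IntervalIntegrable f volume a b) (i : m) (j : n) :
    (∫ t in a..b, f t) i j = ∫ t in a..b, f t i j :=
  ((entryLinearMap ℝ ℂ i j).toContinuousLinearMap.intervalIntegral_comp_comm hf).symm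

theorem Matrix.integrableOn_of_forall_apply [DecidableEq m] {f : ℝ → Matrix m n ℂ}
    {s : Set ℝ} (hf : ∀ i j, IntegrableOn (fun t => f t i j) s) : IntegrableOn f s := by
  have hsum : f = fun t => ∑ i, ∑ j, f t i j • single i j (1 : ℂ) := by
    ext t : 1
    simp_rw [smul_single, smul_eq_mul, mul_one]
    exact matrix_eq_sum_single (f t)
  rw [hsum]
  exact integrable_finsetSum _ fun i _ => integrable_finsetSum _ fun j _ => (hf i j).smul_const _

theorem Matrix.exists_hasDerivWithinAt_apply_mul_tendsto_one [DecidableEq m]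
    {A B : ℝ → Matrix m m ℂ} {t₀ : ℝ} (hA : ∀ i j, ContinuousOn (fun t => A t i j) (Ici t₀))
    (hB : ∀ t ∈ Ici t₀, ∀ i j, Tendsto (fun T => ∫ s in t..T, A s i j) atTop (𝓝 (B t i j)))
    (hAB : ∀ i j, IntegrableOn (fun t => (A t * B t) i j) (Ici t₀)) :
    ∃ t₁, t₀ ≤ t₁ ∧ ∃ X : ℝ → Matrix m m ℂ,
      (∀ t ∈ Ici t₁, ∀ i j, HasDerivWithinAt (fun u => X u i j) ((A t * X t) i j) (Ici t₁) t) ∧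
      Tendsto X atTop (𝓝 1) := by
  have hAc : ContinuousOn A (Ici t₀) := continuousOn_pi.2 fun i => continuousOn_pi.2 (hA i)
  have hBm : ∀ t ∈ Ici t₀, Tendsto (fun T => ∫ s in t..T, A s) atTop (𝓝 (B t)) := fun t ht =>
    tendsto_pi_nhds.2 fun i => tendsto_pi_nhds.2 fun j => (hB t ht i j).congr' <| by
      filter_upwards [eventually_ge_atTop t] with T hT
      exact (Matrix.intervalIntegral_apply (hAc.mono fun s hs => ht.trans
        (le_trans (le_min le_rfl hT) hs.1)).intervalIntegrable i j).symm
  obtain ⟨t₁, ht₁, X, hX, hXlim⟩ :=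
    exists_hasDerivWithinAt_mul_tendsto_one hAc hBm (Matrix.integrableOn_of_forall_apply hAB)
  exact ⟨t₁, ht₁, X, fun t ht i j =>
    (entryLinearMap ℝ ℂ i j).toContinuousLinearMap.hasFDerivAt.comp_hasDerivWithinAt t (hX t ht),
    hXlim⟩

end L2OpNorm

theorem dunkl_stmt2_general (n : ℕ) (t₀ : ℝ)
    (A B : ℝ → Matrix (Fin n) (Fin n) ℂ)
    (hAc : ∀ i j, ContinuousOn (fun t => A t i j) (Ici t₀))
    (hB : ∀ t ∈ Ici t₀, ∀ i j,
      Tendsto (fun T => ∫ s in t..T, A s i j) atTop (nhds (B t i j)))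
    (hAB : ∀ i j, IntegrableOn (fun t => (A t * B t) i j) (Ici t₀)) :
    ∀ j : Fin n, ∃ t₁ : ℝ, t₀ ≤ t₁ ∧ ∃ x : ℝ → Fin n → ℂ,
      (∀ t ∈ Ici t₁, HasDerivWithinAt x (A t *ᵥ x t) (Ici t₁) t) ∧
      Tendsto x atTop (nhds (Pi.single j 1)) := by
  intro j
  obtain ⟨t₁, ht₁, X, hX, hXlim⟩ := Matrix.exists_hasDerivWithinAt_apply_mul_tendsto_one hAc hB hAB
  refine ⟨t₁, ht₁, fun t i => X t i j, fun t ht => hasDerivWithinAt_pi.2 fun i => hX t ht i j,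
    tendsto_pi_nhds.2 fun i => ?_⟩
  simpa [one_apply, Pi.single_apply] using tendsto_pi_nhds.1 (tendsto_pi_nhds.1 hXlim i) j

/-- Levinson/Wintner-type asymptotic integration: under the integrability conditions
on `A` and `Ã(t) = ∫_t^∞ A(s) ds`, for every index `j` there is a solution of
`x' = A(t)x` on some `[t₁,∞)` tending to the `j`-th standard unit vector at infinity. -/
theorem dunkl_stmt2 (n : ℕ) (hn : 1 ≤ n) (t₀ : ℝ)
    (A B : ℝ → Matrix (Fin n) (Fin n) ℂ)
    (hAc : ∀ i j, ContinuousOn (fun t => A t i j) (Ici t₀))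
    (hB : ∀ t ∈ Ici t₀, ∀ i j,
      Tendsto (fun T => ∫ s in t..T, A s i j) atTop (nhds (B t i j)))
    (hAB : ∀ i j, IntegrableOn (fun t => (A t * B t) i j) (Ici t₀)) :
    ∀ j : Fin n, ∃ t₁ : ℝ, t₀ ≤ t₁ ∧ ∃ x : ℝ → Fin n → ℂ,
      (∀ t ∈ Ici t₁, HasDerivWithinAt x (A t *ᵥ x t) (Ici t₁) t) ∧
      Tendsto x atTop (nhds (Pi.single j 1)) :=
  dunkl_stmt2_general n t₀ A B hAc hB hAB
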